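/- arXiv:1505.01364 — 2 statements merged into one kernel-verified Lean document; each statement's English description precedes it below -/
import Mathlib

section
/- Let G be a locally compact group, (Kₙ) an increasing sequence of compact subsets whose interiors cover G, (αₙ) an increasing unbounded sequence of positive reals, and (εₙ) a decreasing null sequence with ∑ αₙεₙ < ∞. Suppose φₙ : G × G → [0,1] are kernels such that |φₙ(x,y) − 1| ≤ εₙ for all (x,y) ∈ Tube(Kₙ), and each φₙ tends to zero off tubes. Then ψ(x,y) = ∑ₙ αₙ(1 − φₙ(x,y)) defines a kernel (the series converges pointwise) which is bounded on every tube and is proper. -/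
def Tube {G : Type*} [Group G] (K : Set G) : Set (G × G) :=
  {p | p.1⁻¹ * p.2 ∈ K}

def IsProperKernel {G : Type*} [Group G] [TopologicalSpace G] (k : G → G → ℝ) : Prop :=
  ∀ R : ℝ, 0 < R → ∃ K : Set G, IsCompact K ∧ {p : G × G | k p.1 p.2 ≤ R} ⊆ Tube K

def BoundedOnTubes {G : Type*} [Group G] [TopologicalSpace G] (k : G → G → ℝ) : Prop :=
  ∀ K : Set G, IsCompact K → ∃ M : ℝ, ∀ p ∈ Tube K, |k p.1 p.2| ≤ M

def TendsToZeroOffTubes {G : Type*} [Group G] [TopologicalSpace G] (k : G → G → ℝ) : Prop :=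
  ∀ ε : ℝ, 0 < ε → ∃ K : Set G, IsCompact K ∧ ∀ p : G × G, p ∉ Tube K → |k p.1 p.2| < ε

/-!
On `Tube (K m)` the terms `αₙ (1 - φₙ)` with `n ≥ m` are bounded by the summable `αₙ εₙ`,
and the finitely many earlier ones by `αₙ`; every compact set lies in some `K m`, which gives
convergence and boundedness on tubes. For properness, pick `n` with `αₙ > 2R`: outside a compact
tube `φₙ < 1/2`, so there already the single term `αₙ (1 - φₙ)` exceeds `R`.
-/

open Set Filter Finset

theorem IsCompact.exists_subset_of_monotone_of_iUnion_interior_eq_univ {X : Type*}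
    [TopologicalSpace X] {C : Set X} {K : ℕ → Set X} (hC : IsCompact C) (hK : Monotone K)
    (hcover : ⋃ n, interior (K n) = univ) : ∃ m, C ⊆ K m := by
  obtain ⟨m, hm⟩ := hC.elim_directed_cover (fun n => interior (K n)) (fun _ => isOpen_interior)
    (hcover ▸ subset_univ C) (Monotone.directed_le fun _ _ hij => interior_mono (hK hij))
  exact ⟨m, hm.trans interior_subset⟩

theorem tsum_le_sum_range_add_tsum_nat_add {f a g : ℕ → ℝ} {m : ℕ} (hf : Summable f)
    (hg : Summable g) (hfa : ∀ n < m, f n ≤ a n) (hfg : ∀ n ≥ m, f n ≤ g n) :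
    ∑' n, f n ≤ ∑ n ∈ range m, a n + ∑' n, g (n + m) := by
  rw [← hf.sum_add_tsum_nat_add m]
  refine add_le_add (sum_le_sum fun n hn => hfa n (mem_range.1 hn)) ?_
  exact ((summable_nat_add_iff m).2 hf).tsum_le_tsum (fun n => hfg _ (Nat.le_add_left m n))
    ((summable_nat_add_iff m).2 hg)

theorem TendsToZeroOffTubes.exists_isCompact_setOf_mul_one_sub_le_subset_tube {G : Type*}
    [Group G] [TopologicalSpace G] {φ : G → G → ℝ} (hφ : TendsToZeroOffTubes φ) {a R : ℝ}
    (ha : 0 ≤ a) (hR : 2 * R < a) :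
    ∃ K : Set G, IsCompact K ∧ {p : G × G | a * (1 - φ p.1 p.2) ≤ R} ⊆ Tube K := by
  obtain ⟨K, hK, hoff⟩ := hφ (1 / 2) one_half_pos
  refine ⟨K, hK, fun p hp => ?_⟩
  by_contra hpK
  have hφp : φ p.1 p.2 < 1 / 2 := (le_abs_self _).trans_lt (hoff p hpK)
  have hhalf : a / 2 ≤ a * (1 - φ p.1 p.2) := by nlinarith
  linarith [show a * (1 - φ p.1 p.2) ≤ R from hp]

theorem sum_of_multipliers_proper_and_bounded_general
    {G : Type*} [Group G] [TopologicalSpace G]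
    (K : ℕ → Set G) (hKmono : Monotone K)
    (hKcover : (⋃ n, interior (K n)) = Set.univ)
    (α : ℕ → ℝ) (hαpos : ∀ n, 0 < α n)
    (hαunbdd : ∀ C : ℝ, ∃ n, C < α n)
    (ε : ℕ → ℝ)
    (hsum : Summable (fun n => α n * ε n))
    (φ : ℕ → G → G → ℝ) (hφrange : ∀ n x y, 0 ≤ φ n x y ∧ φ n x y ≤ 1)
    (hφunif : ∀ n, ∀ p ∈ Tube (K n), |φ n p.1 p.2 - 1| ≤ ε n)
    (hφzero : ∀ n, TendsToZeroOffTubes (φ n)) :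
    (∀ x y : G, Summable (fun n => α n * (1 - φ n x y))) ∧
    BoundedOnTubes (fun x y => ∑' n, α n * (1 - φ n x y)) ∧
    IsProperKernel (fun x y => ∑' n, α n * (1 - φ n x y)) := by
  have hterm_nonneg (n : ℕ) (x y : G) : 0 ≤ α n * (1 - φ n x y) :=
    mul_nonneg (hαpos n).le (sub_nonneg.2 (hφrange n x y).2)
  have hterm_le (n : ℕ) (x y : G) : α n * (1 - φ n x y) ≤ α n :=
    mul_le_of_le_one_right (hαpos n).le (by linarith [(hφrange n x y).1])
  have hterm_tube {m : ℕ} {p : G × G} (hp : p ∈ Tube (K m)) (n : ℕ) (hn : n ≥ m) :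
      α n * (1 - φ n p.1 p.2) ≤ α n * ε n := by
    have := neg_le_of_abs_le (hφunif n p (hKmono hn hp))
    exact mul_le_mul_of_nonneg_left (by linarith) (hαpos n).le
  have hsummable (x y : G) : Summable (fun n => α n * (1 - φ n x y)) := by
    obtain ⟨m, hm⟩ : ∃ m, {x⁻¹ * y} ⊆ K m :=
      isCompact_singleton.exists_subset_of_monotone_of_iUnion_interior_eq_univ hKmono hKcover
    refine hsum.of_norm_bounded_eventually_nat (eventually_atTop.2 ⟨m, fun n hn => ?_⟩)
    rw [Real.norm_of_nonneg (hterm_nonneg n x y)]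
    exact hterm_tube (p := (x, y)) (hm rfl) n hn
  refine ⟨hsummable, fun C hC => ?_, fun R _ => ?_⟩
  · obtain ⟨m, hm⟩ := hC.exists_subset_of_monotone_of_iUnion_interior_eq_univ hKmono hKcover
    refine ⟨∑ n ∈ range m, α n + ∑' n, α (n + m) * ε (n + m), fun p hp => ?_⟩
    rw [abs_of_nonneg (tsum_nonneg fun n => hterm_nonneg n p.1 p.2)]
    exact tsum_le_sum_range_add_tsum_nat_add (hsummable p.1 p.2) hsum
      (fun n _ => hterm_le n p.1 p.2) (hterm_tube (hm hp))
  · obtain ⟨n, hn⟩ := hαunbdd (2 * R)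
    obtain ⟨C, hC, hsub⟩ :=
      (hφzero n).exists_isCompact_setOf_mul_one_sub_le_subset_tube (hαpos n).le hn
    exact ⟨C, hC, fun p hp => hsub <|
      ((hsummable p.1 p.2).le_tsum n fun j _ => hterm_nonneg j p.1 p.2).trans hp⟩

theorem sum_of_multipliers_proper_and_bounded
    {G : Type*} [Group G] [TopologicalSpace G] [IsTopologicalGroup G]
    [LocallyCompactSpace G]
    (K : ℕ → Set G) (hKcpt : ∀ n, IsCompact (K n)) (hKmono : Monotone K)
    (hKcover : (⋃ n, interior (K n)) = Set.univ)
    (α : ℕ → ℝ) (hαpos : ∀ n, 0 < α n) (hαmono : Monotone α)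
    (hαunbdd : ∀ C : ℝ, ∃ n, C < α n)
    (ε : ℕ → ℝ) (hεanti : Antitone ε)
    (hεnull : Filter.Tendsto ε Filter.atTop (nhds 0))
    (hsum : Summable (fun n => α n * ε n))
    (φ : ℕ → G → G → ℝ) (hφrange : ∀ n x y, 0 ≤ φ n x y ∧ φ n x y ≤ 1)
    (hφunif : ∀ n, ∀ p ∈ Tube (K n), |φ n p.1 p.2 - 1| ≤ ε n)
    (hφzero : ∀ n, TendsToZeroOffTubes (φ n)) :
    (∀ x y : G, Summable (fun n => α n * (1 - φ n x y))) ∧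
    BoundedOnTubes (fun x y => ∑' n, α n * (1 - φ n x y)) ∧
    IsProperKernel (fun x y => ∑' n, α n * (1 - φ n x y)) :=
  sum_of_multipliers_proper_and_bounded_general K hKmono hKcover α hαpos hαunbdd ε hsum φ hφrange
    hφunif hφzero
end

section
/- Let G be a locally compact group. If there exists a conditionally negative definite kernel h : G × G → ℝ which is proper and bounded on tubes, then G admits a coarse embedding into a real Hilbert space. -/
def IsCondNegDef {G : Type*} (h : G → G → ℝ) : Prop :=
  (∀ x y, h x y = h y x) ∧ (∀ x, h x x = 0) ∧
  ∀ (n : ℕ) (x : Fin n → G) (c : Fin n → ℝ), (∑ i, c i) = 0 →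
    (∑ i, ∑ j, c i * c j * h (x i) (x j)) ≤ 0

def IsCoarseEmbedding {G H : Type*} [Group G] [TopologicalSpace G]
    [NormedAddCommGroup H] (u : G → H) : Prop :=
  (∀ K : Set G, IsCompact K → ∃ R : ℝ, 0 < R ∧ ∀ p ∈ Tube K, ‖u p.1 - u p.2‖ ≤ R) ∧
  (∀ R : ℝ, 0 < R → ∃ K : Set G, IsCompact K ∧
    ∀ s t : G, ‖u s - u t‖ ≤ R → (s, t) ∈ Tube K)

/-!
Properness of `h` makes `G` σ-compact, so there is a sequence `a` in `G` such that every point lies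
in a fixed compact tube around some `a n`. The GNS construction turns the conditionally negative
definite kernel `h` into vectors `v n` of a Hilbert space with `‖v m - v n‖² = h (a m) (a n)`;
it is run over `ℕ` to keep the Hilbert space in `Type`. Applied over `G` itself it shows that `√h`
is a pseudometric, so moving both points to their nearby `a n` changes `√h` by a bounded amount.
Properness and boundedness on tubes of `h` are then the two halves of being a coarse embedding.
-/

universe u

open scoped InnerProductSpace Topology

namespace IsCondNegDef

variable {ι κ : Type*} {h : ι → ι → ℝ}

theorem comp (hcnd : IsCondNegDef h) (f : κ → ι) : IsCondNegDef fun i j => h (f i) (f j) :=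
  ⟨fun _ _ => hcnd.1 _ _, fun _ => hcnd.2.1 _, fun n x c hc => hcnd.2.2 n (f ∘ x) c hc⟩

theorem sum_nonpos (hcnd : IsCondNegDef h) {α : Type*} (s : Finset α) (x : α → ι) (c : α → ℝ)
    (hc : ∑ i ∈ s, c i = 0) : ∑ i ∈ s, ∑ j ∈ s, c i * c j * h (x i) (x j) ≤ 0 := by
  let e := s.equivFin.symm
  have hsum : ∀ f : α → ℝ, ∑ i ∈ s, f i = ∑ k, f (e k) := fun f => by
    rw [← Finset.sum_coe_sort, e.sum_comp fun i : s => f i]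
  rw [hsum] at hc
  simp only [hsum]
  exact hcnd.2.2 _ (fun k => x (e k)) (fun k => c (e k)) hc

/-- Chosen so that `h x y = k x x + k y y - 2 * k x y` for `k = gnsKernel h o` when `h` vanishes on
the diagonal. -/
noncomputable def gnsKernel (h : ι → ι → ℝ) (o x y : ι) : ℝ := (h x o + h y o - h x y) / 2

theorem sum_mul_gnsKernel_nonneg (hcnd : IsCondNegDef h) (o : ι) (s : Finset ι) (c : ι → ℝ) :
    0 ≤ ∑ x ∈ s, ∑ y ∈ s, c x * c y * gnsKernel h o x y := by
  set T := ∑ x ∈ s, c x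
  set P := ∑ x ∈ s, c x * h x o
  -- the defining inequality for `c` extended by the weight `-T` at the base point `o`
  have hcnd' := hcnd.sum_nonpos s.insertNone (fun x => x.elim o id) (fun x => x.elim (-T) c)
    (by simp [T])
  simp only [Finset.sum_insertNone, Option.elim_none, Option.elim_some, id, hcnd.2.1, mul_zero,
    zero_add, Finset.sum_add_distrib, hcnd.1 o] at hcnd'
  have hPT : ∑ x ∈ s, ∑ y ∈ s, c x * c y * h x o = P * T := by
    simp only [P, T, Finset.sum_mul_sum]
    exact Finset.sum_congr rfl fun x _ => Finset.sum_congr rfl fun y _ => by ring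
  have hTP : ∑ x ∈ s, ∑ y ∈ s, c x * c y * h y o = P * T := by
    rw [Finset.sum_comm, ← hPT]
    exact Finset.sum_congr rfl fun x _ => Finset.sum_congr rfl fun y _ => by ring
  have hP : ∑ x ∈ s, -T * c x * h x o = -(P * T) := by
    simp only [P, Finset.sum_mul, ← Finset.sum_neg_distrib]
    exact Finset.sum_congr rfl fun x _ => by ring
  have hP' : ∑ x ∈ s, c x * -T * h x o = -(P * T) := by
    rw [← hP]
    exact Finset.sum_congr rfl fun x _ => by ring
  simp only [gnsKernel, mul_div_assoc', ← Finset.sum_div, mul_add, mul_sub, Finset.sum_add_distrib,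
    Finset.sum_sub_distrib, hPT, hTP]
  linarith

theorem gnsKernel_comm (hcnd : IsCondNegDef h) (o x y : ι) :
    gnsKernel h o x y = gnsKernel h o y x := by
  rw [gnsKernel, gnsKernel, hcnd.1 x y, add_comm (h x o)]

noncomputable def gnsMatrix (h : ι → ι → ℝ) (o : ι) : Matrix ι ι (ℝ →L[ℝ] ℝ) :=
  Matrix.of fun x y => gnsKernel h o x y • 1

theorem posSemidef_gnsMatrix (hcnd : IsCondNegDef h) (o : ι) : (gnsMatrix h o).PosSemidef := by
  have hiff := (RKHS.posSemidef_tfae (𝕜 := ℝ) (K := gnsMatrix h o)).out 0 2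
  refine hiff.mpr ⟨?_, fun c => ?_⟩
  · ext x y : 2
    simp [gnsMatrix, hcnd.gnsKernel_comm o y x]
  · simp only [gnsMatrix, Matrix.of_apply, smul_apply, one_apply_eq_self, smul_eq_mul,
      Real.inner_apply, RCLike.re_to_real, Finsupp.sum]
    rw [Finset.sum_comm]
    exact (hcnd.sum_mul_gnsKernel_nonneg o c.support c).trans_eq
      (Finset.sum_congr rfl fun x _ => Finset.sum_congr rfl fun y _ => by ring)

theorem exists_norm_sub_sq_eq {ι : Type u} [Nonempty ι] {h : ι → ι → ℝ} (hcnd : IsCondNegDef h) :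
    ∃ (H : Type u) (_ : NormedAddCommGroup H) (_ : InnerProductSpace ℝ H) (_ : CompleteSpace H)
      (v : ι → H), ∀ x y, ‖v x - v y‖ ^ 2 = h x y := by
  let o := Classical.arbitrary ι
  have : Fact (gnsMatrix h o).PosSemidef := ⟨hcnd.posSemidef_gnsMatrix o⟩
  let H := RKHS.OfKernel (gnsMatrix h o)
  have hinner : ∀ x y, ⟪RKHS.kerFun H x 1, RKHS.kerFun H y 1⟫_ℝ = gnsKernel h o x y := by
    intro x y
    rw [← RKHS.kernel_inner, RKHS.OfKernel.kernel_ofKernel]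
    simp [gnsMatrix, hcnd.gnsKernel_comm o y x]
  refine ⟨H, inferInstance, inferInstance, inferInstance, fun x => RKHS.kerFun H x 1, fun x y => ?_⟩
  rw [norm_sub_sq_real, ← real_inner_self_eq_norm_sq, ← real_inner_self_eq_norm_sq, hinner, hinner,
    hinner]
  simp only [gnsKernel, hcnd.2.1]
  ring

theorem abs_sqrt_sub_sqrt_le (hcnd : IsCondNegDef h)
    {x x' y y' : ι} {M : ℝ} (hx : h x' x ≤ M) (hy : h y' y ≤ M) :
    |√(h x' y') - √(h x y)| ≤ 2 * √M := by
  have : Nonempty ι := ⟨x⟩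
  obtain ⟨H, _, _, _, w, hw⟩ := hcnd.exists_norm_sub_sq_eq
  have hdist : ∀ a b, √(h a b) = ‖w a - w b‖ := fun a b => by
    rw [← hw, Real.sqrt_sq (norm_nonneg _)]
  calc |√(h x' y') - √(h x y)|
      ≤ ‖(w x' - w y') - (w x - w y)‖ := by rw [hdist, hdist]; exact abs_norm_sub_norm_le _ _
    _ = ‖(w x' - w x) - (w y' - w y)‖ := by congr 1; abel
    _ ≤ ‖w x' - w x‖ + ‖w y' - w y‖ := norm_sub_le _ _
    _ ≤ √M + √M := by rw [← hdist, ← hdist]; gcongr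
    _ = 2 * √M := by ring

end IsCondNegDef

section Group

variable {G : Type*} [Group G] [TopologicalSpace G]

theorem IsProperKernel.sigmaCompactSpace {h : G → G → ℝ} (hproper : IsProperKernel h) :
    SigmaCompactSpace G := by
  choose K hK hsub using fun n : ℕ => hproper (n + 1) (by positivity)
  refine ⟨⟨K, hK, Set.eq_univ_of_forall fun x => Set.mem_iUnion.2 ⟨⌈h 1 x⌉₊, ?_⟩⟩⟩
  have hx : ((1 : G), x) ∈ {p : G × G | h p.1 p.2 ≤ (⌈h 1 x⌉₊ : ℕ) + 1} := by
    show h 1 x ≤ _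
    linarith [Nat.le_ceil (h 1 x)]
  simpa [Tube] using hsub _ hx

theorem exists_seq_forall_exists_mem_tube [IsTopologicalGroup G] [SigmaCompactSpace G] {U : Set G}
    (hU : U ∈ 𝓝 1) : ∃ a : ℕ → G, ∀ x, ∃ m, (a m, x) ∈ Tube U := by
  have hnhds : ∀ z : G, {x | (z, x) ∈ Tube U} ∈ 𝓝 z := fun z =>
    (continuous_const_mul z⁻¹).continuousAt.preimage_mem_nhds (by rwa [inv_mul_cancel])
  obtain ⟨D, hDc, hDcover⟩ := countable_cover_nhds hnhds
  have hcover : ∀ x, ∃ z ∈ D, (z, x) ∈ Tube U := fun x => by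
    simpa using Set.eq_univ_iff_forall.1 hDcover x
  obtain ⟨a, rfl⟩ := hDc.exists_eq_range ((hcover 1).imp fun _ => And.left)
  exact ⟨a, fun x => by simpa using hcover x⟩

theorem isCoarseEmbedding_of_abs_norm_sub_sqrt_le {E : Type*} [NormedAddCommGroup E]
    {h : G → G → ℝ} (hproper : IsProperKernel h) (hbdd : BoundedOnTubes h) {u : G → E} {C : ℝ}
    (hu : ∀ s t, |‖u s - u t‖ - √(h s t)| ≤ C) : IsCoarseEmbedding u := by
  have hC : 0 ≤ C := (abs_nonneg _).trans (hu 1 1)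
  constructor
  · intro K hK
    obtain ⟨M, hM⟩ := hbdd K hK
    refine ⟨√M + C + 1, by positivity, fun p hp => ?_⟩
    have hsqrt : √(h p.1 p.2) ≤ √M := Real.sqrt_le_sqrt ((le_abs_self _).trans (hM p hp))
    linarith [(abs_le.1 (hu p.1 p.2)).2]
  · intro R hR
    obtain ⟨K, hK, hsub⟩ := hproper ((R + C) ^ 2 + 1) (by positivity)
    refine ⟨K, hK, fun s t hst => hsub ?_⟩
    have hsqrt : √(h s t) ≤ R + C := by linarith [(abs_le.1 (hu s t)).1]
    have := (Real.sqrt_le_iff.1 hsqrt).2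
    show h s t ≤ (R + C) ^ 2 + 1
    linarith

end Group

theorem cnd_proper_bounded_gives_coarse_embedding
    {G : Type*} [Group G] [TopologicalSpace G] [IsTopologicalGroup G]
    [LocallyCompactSpace G]
    (h : G → G → ℝ) (hcnd : IsCondNegDef h)
    (hproper : IsProperKernel h) (hbdd : BoundedOnTubes h) :
    ∃ (H : Type) (_ : NormedAddCommGroup H) (_ : InnerProductSpace ℝ H)
      (_ : CompleteSpace H) (u : G → H), IsCoarseEmbedding u := by
  obtain ⟨U, hUc, hU1⟩ := exists_compact_mem_nhds (1 : G)
  obtain ⟨M, hM⟩ := hbdd U hUc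
  have := hproper.sigmaCompactSpace
  obtain ⟨a, ha⟩ := exists_seq_forall_exists_mem_tube hU1
  choose ψ hψ using ha
  have hnear : ∀ x, h (a (ψ x)) x ≤ M := fun x => (le_abs_self _).trans (hM _ (hψ x))
  obtain ⟨H, _, _, _, v, hv⟩ := (hcnd.comp a).exists_norm_sub_sq_eq
  refine ⟨H, inferInstance, inferInstance, inferInstance, v ∘ ψ,
    isCoarseEmbedding_of_abs_norm_sub_sqrt_le hproper hbdd (C := 2 * √M) fun s t => ?_⟩
  have hvdist : ‖v (ψ s) - v (ψ t)‖ = √(h (a (ψ s)) (a (ψ t))) := by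
    rw [← hv, Real.sqrt_sq (norm_nonneg _)]
  simpa [hvdist] using hcnd.abs_sqrt_sub_sqrt_le (hnear s) (hnear t)
end
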